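/- Define FAd(X) = {(⌊u⌋, t) : ⌊u⌋ sorted nonempty word on X, 1 ≤ t ≤ |u|, and t = 1 or ⌊u⌋_t > ⌊u⌋_{t−1}}. Then for every u ∈ X⁺ and 1 ≤ m ≤ |u|, the pair (⌊u⌋, τ_u(m)) lies in FAd(X), and the map [u]_m ↦ (⌊u⌋, τ_u(m)) is surjective onto FAd(X). -/

import Mathlib

/-! In the sorted word `⌊u⌋`, a position `t` is the first occurrence of its letter exactly when
`t = 1` or the letter strictly increases at `t`. The value `τ_u(m)` is by construction such a first
occurrence, whence membership in `FAd(X)`. Conversely, a sorted word `w` is its own rearrangement,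
so for `(w, t) ∈ FAd(X)` the first occurrence of `w_t` is `t` itself and `[w]_t` is a preimage. -/

variable {X : Type*} [LinearOrder X] [Inhabited X]

/-- ⌊u⌋: the nondecreasing rearrangement of the word u. -/
def sortW (u : List X) : List X := u.insertionSort (· ≤ ·)

/-- λ_{⌊u⌋}(x): the first (1-based) position of the letter x in ⌊u⌋. -/
def lam (u : List X) (x : X) : ℕ := (sortW u).idxOf x + 1

/-- τ_u(m) = λ_{⌊u⌋}(u_m), where u_m is the m-th (1-based) letter of u. -/
def tau (u : List X) (m : ℕ) : ℕ := lam u (u.getD (m - 1) default)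

/-- FAd(X): pairs (⌊u⌋, t) with ⌊u⌋ a sorted nonempty word, 1 ≤ t ≤ |u|, and
either t = 1 or the t-th letter of ⌊u⌋ is strictly greater than the (t−1)-th. -/
def FAdSet : Set (List X × ℕ) :=
  {p | p.1 ≠ [] ∧ List.Pairwise (· ≤ ·) p.1 ∧ 1 ≤ p.2 ∧ p.2 ≤ p.1.length ∧
    (p.2 = 1 ∨ p.1.getD (p.2 - 2) default < p.1.getD (p.2 - 1) default)}

namespace List

variable {α : Type*}

theorem idxOf_getElem_eq_iff [DecidableEq α] {l : List α} {i : ℕ} (h : i < l.length) :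
    l.idxOf l[i] = i ↔ ∀ j (hj : j < i), l[j] ≠ l[i] := by
  simpa [idxOf] using findIdx_eq (p := (· == l[i])) h

variable [LinearOrder α] {l : List α}

theorem SortedLE.idxOf_getElem_eq_iff (hl : l.SortedLE) {i : ℕ} (h : i < l.length) :
    l.idxOf l[i] = i ↔ i = 0 ∨ l[i - 1] < l[i] := by
  rw [List.idxOf_getElem_eq_iff h]
  constructor
  · intro hfirst
    rcases Nat.eq_zero_or_pos i with hi | hi
    · exact .inl hi
    · exact .inr <| (hl.getElem_le_getElem_of_le (Nat.sub_le i 1)).lt_of_ne (hfirst _ (by omega))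
  · rintro (rfl | hlt) j hj
    · omega
    · exact ((hl.getElem_le_getElem_of_le (by omega : j ≤ i - 1)).trans_lt hlt).ne

theorem SortedLE.idxOf_getD_add_one_eq_iff (hl : l.SortedLE) (d : α) {t : ℕ}
    (h1 : 1 ≤ t) (ht : t ≤ l.length) :
    l.idxOf (l.getD (t - 1) d) + 1 = t ↔ t = 1 ∨ l.getD (t - 2) d < l.getD (t - 1) d := by
  obtain ⟨i, rfl⟩ : ∃ i, t = i + 1 := ⟨t - 1, by omega⟩
  have hi : i < l.length := by omega
  simp only [Nat.add_sub_cancel, show i + 1 - 2 = i - 1 by omega, getD_eq_getElem _ _ hi,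
    getD_eq_getElem _ _ (lt_of_le_of_lt (Nat.sub_le i 1) hi), Nat.add_left_inj,
    Nat.add_eq_right]
  exact hl.idxOf_getElem_eq_iff hi

end List

section

variable {α : Type*} [LinearOrder α]

theorem sortW_perm (u : List α) : (sortW u).Perm u := u.perm_insertionSort (· ≤ ·)

theorem pairwise_sortW (u : List α) : (sortW u).Pairwise (· ≤ ·) :=
  List.pairwise_insertionSort (· ≤ ·) u

theorem sortW_eq_self {u : List α} (hu : u.Pairwise (· ≤ ·)) : sortW u = u :=
  hu.insertionSort_eq

variable [Inhabited α]

theorem sortW_tau_mem_FAdSet {u : List α} {m : ℕ} (h1 : 1 ≤ m) (hm : m ≤ u.length) :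
    (sortW u, tau u m) ∈ FAdSet := by
  have hx : u.getD (m - 1) default ∈ sortW u := by
    rw [(sortW_perm u).mem_iff, List.getD_eq_getElem _ _ (by omega)]
    exact List.getElem_mem _
  have hi := List.idxOf_lt_length_of_mem hx
  refine ⟨List.ne_nil_of_mem hx, pairwise_sortW u, Nat.le_add_left 1 _, hi, ?_⟩
  refine ((pairwise_sortW u).sortedLE.idxOf_getD_add_one_eq_iff default
    (Nat.le_add_left 1 _) hi).1 ?_
  simp only [Nat.add_sub_cancel, List.getD_eq_getElem _ _ hi, List.getElem_idxOf]

theorem tau_eq_of_mem_FAdSet {w : List α} {t : ℕ} (hp : (w, t) ∈ FAdSet) : tau w t = t := by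
  obtain ⟨-, hw, h1, ht, hfirst⟩ := hp
  simpa [tau, lam, sortW_eq_self hw] using
    (hw.sortedLE.idxOf_getD_add_one_eq_iff default h1 ht).2 hfirst

end

/-- For every u ∈ X⁺ and 1 ≤ m ≤ |u|, (⌊u⌋, τ_u(m)) ∈ FAd(X), and
the map [u]_m ↦ (⌊u⌋, τ_u(m)) is surjective onto FAd(X). -/
theorem stmt19 :
    (∀ u : List X, ∀ m : ℕ, u ≠ [] → 1 ≤ m → m ≤ u.length →
      (sortW u, tau u m) ∈ FAdSet) ∧
    (∀ p ∈ FAdSet (X := X), ∃ u : List X, ∃ m : ℕ,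
      u ≠ [] ∧ 1 ≤ m ∧ m ≤ u.length ∧ (sortW u, tau u m) = p) := by
  refine ⟨fun u m _ h1 hm => sortW_tau_mem_FAdSet h1 hm, ?_⟩
  rintro ⟨w, t⟩ hp
  obtain ⟨hne, hw, h1, ht, -⟩ := id hp
  exact ⟨w, t, hne, h1, ht, by rw [sortW_eq_self hw, tau_eq_of_mem_FAdSet hp]⟩
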